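/- arXiv:2512.14568 — 4 statements merged into one kernel-verified Lean document; each statement's English description precedes it below -/
import Mathlib

section
/- Let L : ℝ^d → ℝ be convex with L(0) = 0, and let H = L* be its Legendre–Fenchel transform. For μ ∈ 𝒫₂(ℝ^d), define the relaxed Hamiltonian ℋ(γ) = ∫ H(p) dγ(x,p) and the relaxed Lagrangian ℒ(ξ) = ∫ L(v) dξ(x,v) on plans with first marginal μ. Then for every γ with first marginal μ, ℋ(γ) = sup over ξ with first marginal μ and over θ ∈ Γ_μ(γ,ξ) of [∫ ⟨−v, p⟩ dθ(x,p,v) − ℒ(ξ)]. -/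
open MeasureTheory Set Filter Metric
open scoped Topology ENNReal NNReal

noncomputable section

abbrev E (d : ℕ) : Type := EuclideanSpace ℝ (Fin d)

/-- Real inner product. -/
def rinner {d : ℕ} (x y : E d) : ℝ := inner ℝ x y

/-- The second moment of a measure. -/
def secondMoment {d : ℕ} (μ : Measure (E d)) : ℝ := ∫ x, ‖x‖ ^ 2 ∂μ

/-- `γ` is a coupling of `μ` and `ν`. -/
def IsCoupling {d : ℕ} (γ : Measure (E d × E d)) (μ ν : Measure (E d)) : Prop :=
  γ.map Prod.fst = μ ∧ γ.map Prod.snd = ν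

/-- The 2-Wasserstein distance. -/
def W2 {d : ℕ} (μ ν : Measure (E d)) : ℝ :=
  sInf {c | ∃ γ : Measure (E d × E d), IsProbabilityMeasure γ ∧ IsCoupling γ μ ν ∧
    c = Real.sqrt (∫ p, ‖p.1 - p.2‖ ^ 2 ∂γ)}

/-- Probability measures with finite second moment. -/
def P2 (d : ℕ) : Set (Measure (E d)) :=
  {μ | IsProbabilityMeasure μ ∧ Integrable (fun x => ‖x‖ ^ 2) μ}

/-- Plans (velocity plans) with first marginal `μ` and finite second moment. -/
def plans {d : ℕ} (μ : Measure (E d)) : Set (Measure (E d × E d)) :=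
  {γ | IsProbabilityMeasure γ ∧ γ.map Prod.fst = μ ∧
    Integrable (fun p => ‖p.1‖ ^ 2 + ‖p.2‖ ^ 2) γ}

/-- The Wasserstein norm of a plan: `‖γ‖_μ = (∫ |z|² dγ(x,z))^{1/2}`. -/
def plNorm {d : ℕ} (γ : Measure (E d × E d)) : ℝ := Real.sqrt (∫ p, ‖p.2‖ ^ 2 ∂γ)

/-- The exponential map `exp_μ(γ) = (π₁ + π₂)_# γ`. -/
def expMap {d : ℕ} (γ : Measure (E d × E d)) : Measure (E d) :=
  γ.map (fun p => p.1 + p.2)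

/-- Rescaling of a plan in the second coordinate: `λ·γ = (π₁, λπ₂)_# γ`. -/
def scal {d : ℕ} (lam : ℝ) (γ : Measure (E d × E d)) : Measure (E d × E d) :=
  γ.map (fun p => (p.1, lam • p.2))

/-- Couplings of two plans along their common first marginal. -/
def GammaMu {d : ℕ} (γ₁ γ₂ : Measure (E d × E d)) : Set (Measure (E d × E d × E d)) :=
  {θ | IsProbabilityMeasure θ ∧ θ.map (fun q => (q.1, q.2.1)) = γ₁ ∧
    θ.map (fun q => (q.1, q.2.2)) = γ₂}

/-- The relaxed Lagrangian `ℒ(γ) = ∫ L(v) dγ(x,v)`. -/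
def Lag {d : ℕ} (L : E d → ℝ) (γ : Measure (E d × E d)) : ℝ := ∫ p, L p.2 ∂γ


/-! The Fenchel–Young inequality `⟨-v, p⟩ - L v ≤ H p`, integrated against any
`θ ∈ Γ_μ(γ, ξ)`, bounds every value in the supremum by `∫ H dγ`. Conversely, for a dense
sequence `(v k)` and continuous `L`, `H p` is the increasing limit of
`max_{k ≤ n} (⟨-v k, p⟩ - L (v k))`. Choosing the maximiser measurably in `p` gives a map `T n`
with finite range, and the plan `(π₁, T n ∘ π₂)_# γ`, coupled to `γ` along the graph of `T n`,
attains `∫ max_{k ≤ n} (…) dγ`. Monotone convergence concludes. -/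

section RunningArgmax

variable {α β : Type*} (g : α → β → ℝ) (v : ℕ → α)

def runningArgmax : ℕ → β → α
  | 0 => fun _ => v 0
  | n + 1 => fun p =>
      if g (runningArgmax n p) p < g (v (n + 1)) p then v (n + 1) else runningArgmax n p

lemma runningArgmax_mem_image (n : ℕ) (p : β) : runningArgmax g v n p ∈ v '' Iic n := by
  induction n with
  | zero => exact ⟨0, mem_Iic.mpr le_rfl, rfl⟩
  | succ n ih =>
    simp only [runningArgmax]
    split_ifs
    · exact ⟨n + 1, mem_Iic.mpr le_rfl, rfl⟩
    · exact image_mono (Iic_subset_Iic.mpr n.le_succ) ih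

lemma apply_runningArgmax_succ (n : ℕ) (p : β) :
    g (runningArgmax g v (n + 1) p) p = max (g (runningArgmax g v n p) p) (g (v (n + 1)) p) := by
  simp only [runningArgmax]
  split_ifs with h
  · exact (max_eq_right h.le).symm
  · exact (max_eq_left (not_lt.mp h)).symm

lemma monotone_apply_runningArgmax (p : β) : Monotone fun n => g (runningArgmax g v n p) p :=
  monotone_nat_of_le_succ fun n => by
    rw [apply_runningArgmax_succ g v]
    exact le_max_left _ _

lemma apply_le_apply_runningArgmax (p : β) {k n : ℕ} (hkn : k ≤ n) :
    g (v k) p ≤ g (runningArgmax g v n p) p := by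
  induction n, hkn using Nat.le_induction with
  | base =>
    cases k with
    | zero => rfl
    | succ k => rw [apply_runningArgmax_succ g v]; exact le_max_right _ _
  | succ n _ ih => exact ih.trans (monotone_apply_runningArgmax g v p n.le_succ)

lemma measurable_runningArgmax [MeasurableSpace α] [MeasurableSpace β]
    (hg : Measurable (Function.uncurry g)) (n : ℕ) : Measurable (runningArgmax g v n) := by
  induction n with
  | zero => exact measurable_const
  | succ n ih =>
    have h_eval : ∀ {T : β → α}, Measurable T → Measurable fun p => g (T p) p :=
      fun hT => hg.comp (hT.prodMk measurable_id)
    exact Measurable.ite (measurableSet_lt (h_eval ih) (h_eval measurable_const))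
      measurable_const ih

lemma tendsto_apply_runningArgmax [TopologicalSpace α] (hv : DenseRange v) {p : β} {h : ℝ}
    (hcont : Continuous fun a => g a p) (hlub : IsLUB (range fun a => g a p) h) :
    Tendsto (fun n => g (runningArgmax g v n p) p) atTop (𝓝 h) := by
  refine tendsto_atTop_isLUB (monotone_apply_runningArgmax g v p) ⟨?_, fun b hb => ?_⟩
  · rintro _ ⟨n, rfl⟩
    exact hlub.1 ⟨_, rfl⟩
  · have h_dense : ∀ a, g a p ≤ b := fun a =>
      hv.induction_on a (isClosed_le hcont continuous_const) fun k =>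
        (apply_le_apply_runningArgmax g v p le_rfl).trans (hb ⟨k, rfl⟩)
    exact hlub.2 (forall_mem_range.mpr h_dense)

lemma exists_norm_runningArgmax_le [SeminormedAddGroup α] (n : ℕ) :
    ∃ B, ∀ p, ‖runningArgmax g v n p‖ ≤ B := by
  obtain ⟨B, hB⟩ := isBounded_iff_forall_norm_le.mp ((finite_Iic n).image v).isBounded
  exact ⟨B, fun p => hB _ (runningArgmax_mem_image g v n p)⟩

end RunningArgmax

section Plans

variable {d : ℕ}

def youngPairing (L : E d → ℝ) (v p : E d) : ℝ := rinner (-v) p - L v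

def relaxedDualValues (L : E d → ℝ) (μ : Measure (E d)) (γ : Measure (E d × E d)) : Set ℝ :=
  {r | ∃ ξ ∈ plans μ, ∃ θ ∈ GammaMu γ ξ, r = (∫ q, rinner (-q.2.2) q.2.1 ∂θ) - Lag L ξ}

lemma continuous_youngPairing {L : E d → ℝ} (hL : Continuous L) :
    Continuous (Function.uncurry (youngPairing L)) := by
  unfold youngPairing rinner
  fun_prop

lemma abs_rinner_le_sq_add_sq (x y : E d) : |rinner x y| ≤ ‖x‖ ^ 2 + ‖y‖ ^ 2 := by
  have : |rinner x y| ≤ ‖x‖ * ‖y‖ := abs_real_inner_le_norm x y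
  nlinarith [sq_nonneg (‖x‖ - ‖y‖)]

variable {μ : Measure (E d)} {γ : Measure (E d × E d)}

lemma integrable_sq_norm_snd (hγ : γ ∈ plans μ) : Integrable (fun q => ‖q.2‖ ^ 2) γ :=
  hγ.2.2.mono' (by fun_prop) (ae_of_all _ fun q => by
    rw [Real.norm_eq_abs, abs_of_nonneg (by positivity)]
    nlinarith [sq_nonneg ‖q.1‖])

lemma integral_rinner_sub_lag_le {L H : E d → ℝ} (hL : Continuous L) {C : ℝ}
    (hquad : ∀ z, |L z| ≤ C * (1 + ‖z‖ ^ 2)) (hyoung : ∀ v p, youngPairing L v p ≤ H p)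
    {ξ : Measure (E d × E d)} {θ : Measure (E d × E d × E d)} (hγ : γ ∈ plans μ)
    (hξ : ξ ∈ plans μ) (hθ : θ ∈ GammaMu γ ξ) (hH : Integrable (fun q => H q.2) γ) :
    (∫ q, rinner (-q.2.2) q.2.1 ∂θ) - Lag L ξ ≤ ∫ q, H q.2 ∂γ := by
  obtain ⟨hθ_prob, rfl, rfl⟩ := hθ
  have hπ₁₂ : Measurable fun q : E d × E d × E d => (q.1, q.2.1) := by fun_prop
  have hπ₁₃ : Measurable fun q : E d × E d × E d => (q.1, q.2.2) := by fun_prop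
  have hp : Integrable (fun q : E d × E d × E d => ‖q.2.1‖ ^ 2) θ :=
    (integrable_sq_norm_snd hγ).comp_measurable hπ₁₂
  have hv : Integrable (fun q : E d × E d × E d => ‖q.2.2‖ ^ 2) θ :=
    (integrable_sq_norm_snd hξ).comp_measurable hπ₁₃
  have h_pairing : Integrable (fun q : E d × E d × E d => rinner (-q.2.2) q.2.1) θ :=
    (hv.add hp).mono' (by unfold rinner; fun_prop) (ae_of_all _ fun q => by
      simpa only [Pi.add_apply, Real.norm_eq_abs, norm_neg] using
        abs_rinner_le_sq_add_sq (-q.2.2) q.2.1)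
  have h_lag : Integrable (fun q : E d × E d × E d => L q.2.2) θ :=
    ((integrable_const 1).add hv).const_mul C |>.mono' (by fun_prop)
      (ae_of_all _ fun q => hquad q.2.2)
  have h_lag_eq : Lag L (θ.map fun q => (q.1, q.2.2)) = ∫ q, L q.2.2 ∂θ :=
    integral_map hπ₁₃.aemeasurable (by fun_prop)
  rw [h_lag_eq, integral_map hπ₁₂.aemeasurable hH.1, ← integral_sub h_pairing h_lag]
  exact integral_mono (h_pairing.sub h_lag) (hH.comp_measurable hπ₁₂) fun q => hyoung _ _

section Selector

variable {T : E d → E d} {B : ℝ}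

lemma integrable_rinner_neg_comp_snd (hγ : γ ∈ plans μ) (hT : Measurable T)
    (hB : ∀ p, ‖T p‖ ≤ B) : Integrable (fun q => rinner (-T q.2) q.2) γ := by
  have := hγ.1
  have hB₀ : 0 ≤ B := (norm_nonneg _).trans (hB 0)
  refine (((integrable_const 1).add (integrable_sq_norm_snd hγ)).const_mul B).mono'
    (by unfold rinner; fun_prop) (ae_of_all _ fun q => ?_)
  have h_cs : |rinner (-T q.2) q.2| ≤ ‖T q.2‖ * ‖q.2‖ := by
    simpa only [rinner, norm_neg] using abs_real_inner_le_norm (-T q.2) q.2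
  have h_T : ‖T q.2‖ * ‖q.2‖ ≤ B * ‖q.2‖ := mul_le_mul_of_nonneg_right (hB _) (norm_nonneg _)
  simp only [Pi.add_apply, Real.norm_eq_abs]
  nlinarith [sq_nonneg (‖q.2‖ - 1)]

lemma integrable_comp_comp_snd {L : E d → ℝ} (hL : Continuous L) [IsFiniteMeasure γ]
    (hT : Measurable T) (hB : ∀ p, ‖T p‖ ≤ B) : Integrable (fun q => L (T q.2)) γ := by
  obtain ⟨M, hM⟩ := (isCompact_closedBall (0 : E d) B).exists_bound_of_continuousOn
    hL.continuousOn
  refine .of_bound (hL.measurable.comp (hT.comp measurable_snd)).aestronglyMeasurable M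
    (ae_of_all _ fun q => hM _ ?_)
  simpa only [mem_closedBall_zero_iff] using hB q.2

lemma map_graph_mem_plans (hγ : γ ∈ plans μ) (hT : Measurable T) (hB : ∀ p, ‖T p‖ ≤ B) :
    γ.map (fun q => (q.1, T q.2)) ∈ plans μ := by
  have h_graph : Measurable fun q : E d × E d => (q.1, T q.2) := by fun_prop
  have := hγ.1
  refine ⟨Measure.isProbabilityMeasure_map h_graph.aemeasurable, ?_, ?_⟩
  · rw [Measure.map_map measurable_fst h_graph]
    exact hγ.2.1
  · refine (integrable_map_measure (by fun_prop) h_graph.aemeasurable).mpr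
      ((hγ.2.2.add (integrable_const (B ^ 2))).mono' (by fun_prop) (ae_of_all _ fun q => ?_))
    have h_T : ‖T q.2‖ ^ 2 ≤ B ^ 2 := pow_le_pow_left₀ (norm_nonneg _) (hB _) 2
    simp only [Function.comp_apply, Pi.add_apply, Real.norm_eq_abs]
    rw [abs_of_nonneg (by positivity)]
    nlinarith [sq_nonneg ‖q.2‖]

lemma map_graph_mem_GammaMu [IsProbabilityMeasure γ] (hT : Measurable T) :
    γ.map (fun q => (q.1, q.2, T q.2)) ∈ GammaMu γ (γ.map fun q => (q.1, T q.2)) := by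
  have h_graph : Measurable fun q : E d × E d => (q.1, q.2, T q.2) := by fun_prop
  refine ⟨Measure.isProbabilityMeasure_map h_graph.aemeasurable, ?_, ?_⟩
  · rw [Measure.map_map (by fun_prop) h_graph]
    exact Measure.map_id
  · rw [Measure.map_map (by fun_prop) h_graph]
    rfl

lemma integral_youngPairing_comp_mem_relaxedDualValues {L : E d → ℝ} (hL : Continuous L)
    (hγ : γ ∈ plans μ) (hT : Measurable T) (hB : ∀ p, ‖T p‖ ≤ B) :
    ∫ q, youngPairing L (T q.2) q.2 ∂γ ∈ relaxedDualValues L μ γ := by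
  have := hγ.1
  refine ⟨_, map_graph_mem_plans hγ hT hB, _, map_graph_mem_GammaMu hT, ?_⟩
  rw [Lag, integral_map (by fun_prop) (by unfold rinner; fun_prop),
    integral_map (by fun_prop) (by fun_prop),
    ← integral_sub (integrable_rinner_neg_comp_snd hγ hT hB) (integrable_comp_comp_snd hL hT hB)]
  rfl

lemma integrable_youngPairing_comp_snd {L : E d → ℝ} (hL : Continuous L) (hγ : γ ∈ plans μ)
    (hT : Measurable T) (hB : ∀ p, ‖T p‖ ≤ B) :
    Integrable (fun q => youngPairing L (T q.2) q.2) γ :=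
  have := hγ.1
  (integrable_rinner_neg_comp_snd hγ hT hB).sub (integrable_comp_comp_snd hL hT hB)

end Selector

end Plans

theorem relaxed_hamiltonian_fenchel_general {d : ℕ} (L H : E d → ℝ)
    (hLconv : ConvexOn ℝ Set.univ L)
    (hquad : ∃ C > 0, ∀ z : E d, |L z| ≤ C * (1 + ‖z‖ ^ 2))
    (hH : ∀ p : E d, IsLUB {r | ∃ v : E d, r = (rinner (-v) (p)) - L v} (H p))
    (μ : Measure (E d))
    (γ : Measure (E d × E d)) (hγ : γ ∈ plans μ)
    (hHint : Integrable (fun q : E d × E d => H q.2) γ) :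
    (∫ q, H q.2 ∂γ) =
      sSup {r | ∃ ξ ∈ plans μ, ∃ θ ∈ GammaMu γ ξ,
        r = (∫ q, (rinner (-q.2.2) (q.2.1)) ∂θ) - ∫ q, L q.2 ∂ξ} := by
  obtain ⟨C, -, hC⟩ := hquad
  have hL : Continuous L := continuousOn_univ.mp (hLconv.continuousOn isOpen_univ)
  have hH_lub : ∀ p, IsLUB (range fun v => youngPairing L v p) (H p) := fun p => by
    convert hH p using 1
    exact Set.ext fun r => exists_congr fun v => eq_comm
  obtain ⟨v, hv⟩ := TopologicalSpace.exists_dense_seq (E d)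
  set T := runningArgmax (youngPairing L) v
  have hT : ∀ n, Measurable (T n) :=
    measurable_runningArgmax _ v (continuous_youngPairing hL).measurable
  have h_mem : ∀ n, ∫ q, youngPairing L (T n q.2) q.2 ∂γ ∈ relaxedDualValues L μ γ := fun n =>
    have ⟨B, hB⟩ := exists_norm_runningArgmax_le (youngPairing L) v n
    integral_youngPairing_comp_mem_relaxedDualValues hL hγ (hT n) hB
  have h_lim : Tendsto (fun n => ∫ q, youngPairing L (T n q.2) q.2 ∂γ) atTop
      (𝓝 (∫ q, H q.2 ∂γ)) := by
    refine integral_tendsto_of_tendsto_of_monotone (fun n => ?_) hHint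
      (ae_of_all _ fun q => monotone_apply_runningArgmax _ v q.2)
      (ae_of_all _ fun q => tendsto_apply_runningArgmax _ v hv
        ((continuous_youngPairing hL).uncurry_right q.2) (hH_lub q.2))
    obtain ⟨B, hB⟩ := exists_norm_runningArgmax_le (youngPairing L) v n
    exact integrable_youngPairing_comp_snd hL hγ (hT n) hB
  refine (IsLUB.csSup_eq ⟨?_, fun b hb => ?_⟩ ⟨_, h_mem 0⟩).symm
  · rintro _ ⟨ξ, hξ, θ, hθ, rfl⟩
    exact integral_rinner_sub_lag_le hL hC (fun v p => (hH_lub p).1 ⟨v, rfl⟩) hγ hξ hθ hHint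
  · exact le_of_tendsto h_lim (Eventually.of_forall fun n => hb (h_mem n))

theorem relaxed_hamiltonian_fenchel {d : ℕ} (L H : E d → ℝ)
    (hLconv : ConvexOn ℝ Set.univ L) (hL0 : L 0 = 0)
    (hquad : ∃ C > 0, ∀ z : E d, |L z| ≤ C * (1 + ‖z‖ ^ 2))
    (hcoer : ∃ c > 0, ∃ C > 0, ∀ z : E d, c * ‖z‖ ^ 2 - C ≤ L z)
    (hH : ∀ p : E d, IsLUB {r | ∃ v : E d, r = (rinner (-v) (p)) - L v} (H p))
    (μ : Measure (E d)) (hμ : μ ∈ P2 d)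
    (γ : Measure (E d × E d)) (hγ : γ ∈ plans μ)
    (hHint : Integrable (fun q : E d × E d => H q.2) γ) :
    (∫ q, H q.2 ∂γ) =
      sSup {r | ∃ ξ ∈ plans μ, ∃ θ ∈ GammaMu γ ξ,
        r = (∫ q, (rinner (-q.2.2) (q.2.1)) ∂θ) - ∫ q, L q.2 ∂ξ} :=
  relaxed_hamiltonian_fenchel_general L H hLconv hquad hH μ γ hγ hHint
end
end

section
/- Let L : ℝ^d → ℝ be convex, superlinear, with at most quadratic growth and satisfying L(z) ≥ c|z|² − C for constants c, C > 0, and L(0) = 0. Let 𝒢 : 𝒫₂(ℝ^d) → ℝ be lower semicontinuous and bounded below. For 0 ≤ t < T and μ ∈ 𝒫₂(ℝ^d) define 𝒱(t,μ) = inf over γ ∈ 𝒫_{2,μ}(ℝ^{2d}) of [𝒢(exp_μ(γ)) + (T−t)·ℒ((1/(T−t))·γ)], where ℒ(ξ) = ∫ L(v) dξ(x,v) and (λ·γ) := (π₁, λπ₂)_# γ. Then the dynamic programming principle holds: for all 0 ≤ t < s < T, 𝒱(t,μ) = inf over γ ∈ 𝒫_{2,μ}(ℝ^{2d}) of [𝒱(s,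 exp_μ(γ)) + (s−t)·ℒ((1/(s−t))·γ)]. -/
open MeasureTheory Set Filter Metric
open scoped Topology ENNReal NNReal

noncomputable section

/-- The Hopf-Lax function. -/
def HL {d : ℕ} (G : Measure (E d) → ℝ) (L : E d → ℝ) (T t : ℝ) (μ : Measure (E d)) : ℝ :=
  sInf {r | ∃ γ ∈ plans μ, r = G (expMap γ) + (T - t) * Lag L (scal (T - t)⁻¹ γ)}

/-!
Both inequalities come from cutting and pasting plans. A plan `γ` from `μ` can be split at the
intermediate time: first move by `λ v` with `λ = (s - t) / (T - t)`, then from `x + λ v` by the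
remaining `(1 - λ) v`; both pieces have the rescaled action of `γ`, so the right-hand side is at
most `𝒱(t, μ)`. Conversely, a plan `γ` from `μ` followed by a plan `σ` from `exp_μ(γ)` can be
glued, by disintegrating `σ` over its first marginal, into a plan from `μ` with displacement
`v + w` and the same endpoint as `σ`; the perspective `τ ↦ τ L(v / τ)` of the convex `L` is
subadditive, so the action of the glued plan is at most the sum of the two actions.
-/

open ProbabilityTheory

lemma ConvexOn.perspective_add_le {V : Type*} [AddCommGroup V] [Module ℝ V] {L : V → ℝ}
    (hL : ConvexOn ℝ univ L) {a b : ℝ} (ha : 0 < a) (hb : 0 < b) (v w : V) :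
    (a + b) * L ((a + b)⁻¹ • (v + w)) ≤ a * L (a⁻¹ • v) + b * L (b⁻¹ • w) := by
  have hcomb : (a / (a + b)) • a⁻¹ • v + (b / (a + b)) • b⁻¹ • w = (a + b)⁻¹ • (v + w) := by
    simp only [smul_smul, smul_add]
    congr 2 <;> field_simp
  have key := hL.2 (mem_univ (a⁻¹ • v)) (mem_univ (b⁻¹ • w)) (by positivity) (by positivity)
    (by field_simp : a / (a + b) + b / (a + b) = 1)
  rw [hcomb, smul_eq_mul, smul_eq_mul] at key
  calc (a + b) * L ((a + b)⁻¹ • (v + w))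
      ≤ (a + b) * (a / (a + b) * L (a⁻¹ • v) + b / (a + b) * L (b⁻¹ • w)) := by gcongr
    _ = a * L (a⁻¹ • v) + b * L (b⁻¹ • w) := by field_simp

lemma exists_gluing {α β Ω : Type*} [MeasurableSpace α] [MeasurableSpace β] [MeasurableSpace Ω]
    [StandardBorelSpace Ω] [Nonempty Ω] (γ : Measure α) [IsProbabilityMeasure γ]
    (σ : Measure (β × Ω)) [IsFiniteMeasure σ] {f : α → β} (hf : Measurable f)
    (h : σ.map Prod.fst = γ.map f) :
    ∃ θ : Measure (α × Ω), IsProbabilityMeasure θ ∧ θ.map Prod.fst = γ ∧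
      θ.map (fun q => (f q.1, q.2)) = σ := by
  have hg : Measurable fun q : α × Ω => (f q.1, q.2) := by fun_prop
  refine ⟨γ ⊗ₘ σ.condKernel.comap f hf, inferInstance, Measure.fst_compProd _ _, ?_⟩
  ext s hs
  rw [Measure.map_apply hg hs, Measure.compProd_apply (hg hs)]
  change ∫⁻ a, σ.condKernel (f a) (Prod.mk (f a) ⁻¹' s) ∂γ = σ s
  rw [← lintegral_map (Kernel.measurable_kernel_prodMk_left hs) hf, ← h, ← Measure.compProd_apply hs, ← Measure.fst, σ.disintegrate σ.condKernel]

section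

variable {d : ℕ} {L : E d → ℝ} {μ ν : Measure (E d)} {γ : Measure (E d × E d)}

lemma mem_P2_iff : ν ∈ P2 d ↔ IsProbabilityMeasure ν ∧ MemLp id 2 ν := by
  rw [memLp_two_iff_integrable_sq_norm aestronglyMeasurable_id]
  rfl

lemma mem_plans_iff :
    γ ∈ plans μ ↔ IsProbabilityMeasure γ ∧ γ.map Prod.fst = μ ∧
      MemLp Prod.fst 2 γ ∧ MemLp Prod.snd 2 γ := by
  rw [memLp_two_iff_integrable_sq_norm measurable_fst.aestronglyMeasurable,
    memLp_two_iff_integrable_sq_norm measurable_snd.aestronglyMeasurable,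
    ← integrable_add_iff_of_nonneg (by fun_prop) (ae_of_all _ fun _ => by positivity)
      (ae_of_all _ fun _ => by positivity)]
  rfl

lemma map_mem_plans {Ω : Type*} [MeasurableSpace Ω] {θ : Measure Ω} [IsProbabilityMeasure θ]
    {X V : Ω → E d} (hX : MemLp X 2 θ) (hV : MemLp V 2 θ) (hXm : Measurable X)
    (hVm : Measurable V) : θ.map (fun ω => (X ω, V ω)) ∈ plans (θ.map X) := by
  have hm : Measurable fun ω => (X ω, V ω) := hXm.prodMk hVm
  refine mem_plans_iff.2 ⟨Measure.isProbabilityMeasure_map hm.aemeasurable,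
    Measure.map_map measurable_fst hm, ?_, ?_⟩
  · exact (memLp_map_measure_iff measurable_fst.aestronglyMeasurable hm.aemeasurable).2 hX
  · exact (memLp_map_measure_iff measurable_snd.aestronglyMeasurable hm.aemeasurable).2 hV

lemma expMap_mem_P2 (hγ : γ ∈ plans μ) :
    expMap γ ∈ P2 d := by
  obtain ⟨hγp, -, h1, h2⟩ := mem_plans_iff.1 hγ
  exact mem_P2_iff.2 ⟨Measure.isProbabilityMeasure_map (by fun_prop),
    (memLp_map_measure_iff aestronglyMeasurable_id (by fun_prop)).2 (h1.add h2)⟩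

lemma zero_mem_plans (hν : ν ∈ P2 d) :
    ν.map (fun y => (y, (0 : E d))) ∈ plans ν := by
  obtain ⟨hνp, h⟩ := mem_P2_iff.1 hν
  simpa using map_mem_plans h (memLp_const 0) measurable_id measurable_const

lemma scal_mem_plans (hγ : γ ∈ plans μ) (a : ℝ) :
    scal a γ ∈ plans μ := by
  obtain ⟨hγp, hfst, h1, h2⟩ := mem_plans_iff.1 hγ
  have := map_mem_plans h1 (h2.const_smul a) measurable_fst (by fun_prop)
  rwa [hfst] at this

lemma scal_scal (a b : ℝ) (γ : Measure (E d × E d)) : scal a (scal b γ) = scal (a * b) γ := by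
  simp only [scal]
  rw [Measure.map_map (by fun_prop) (by fun_prop)]
  simp only [Function.comp_def, smul_smul]

lemma Lag_scal (hL : Continuous L) (a : ℝ) (γ : Measure (E d × E d)) :
    Lag L (scal a γ) = ∫ p, L (a • p.2) ∂γ :=
  integral_map (by fun_prop) (by fun_prop)

lemma Lag_scal_map (hL : Continuous L) (a : ℝ) {Ω : Type*} [MeasurableSpace Ω] {θ : Measure Ω}
    {g : Ω → E d × E d} (hg : Measurable g) :
    Lag L (scal a (θ.map g)) = ∫ ω, L (a • (g ω).2) ∂θ := by
  rw [Lag_scal hL, integral_map hg.aemeasurable (by fun_prop)]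

lemma neg_le_Lag {B : ℝ} (hB : 0 ≤ B) (hlow : ∀ z, -B ≤ L z) (γ : Measure (E d × E d))
    [IsProbabilityMeasure γ] : -B ≤ Lag L γ := by
  by_cases hint : Integrable (fun p => L p.2) γ
  · simpa [Lag] using integral_mono (integrable_const (-B)) hint fun p => hlow p.2
  · rw [Lag, integral_undef hint]
    linarith

lemma integrable_comp_of_memLp_two {Ω : Type*} [MeasurableSpace Ω] {θ : Measure Ω}
    [IsFiniteMeasure θ] {B C : ℝ} (hL : Continuous L) (hlow : ∀ z, -B ≤ L z)
    (hup : ∀ z, L z ≤ C * (1 + ‖z‖ ^ 2)) {Y : Ω → E d} (hY : MemLp Y 2 θ) :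
    Integrable (fun ω => L (Y ω)) θ := by
  refine Integrable.mono' (((integrable_const (|B| + |C|)).add
    ((hY.integrable_norm_pow two_ne_zero).const_mul |C|))) (hL.comp_aestronglyMeasurable hY.1)
    (ae_of_all _ fun ω => ?_)
  have h1 := hlow (Y ω)
  have h2 := hup (Y ω)
  simp only [Real.norm_eq_abs, Pi.add_apply, abs_le]
  have h3 := mul_le_mul_of_nonneg_right (le_abs_self C) (sq_nonneg ‖Y ω‖)
  have h4 := mul_nonneg (abs_nonneg C) (sq_nonneg ‖Y ω‖)
  constructor <;> linarith [le_abs_self B, le_abs_self C, abs_nonneg B, abs_nonneg C]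

lemma integral_perspective_le (hLconv : ConvexOn ℝ univ L) {B C : ℝ} (hL : Continuous L)
    (hlow : ∀ z, -B ≤ L z) (hup : ∀ z, L z ≤ C * (1 + ‖z‖ ^ 2)) {a b : ℝ} (ha : 0 < a)
    (hb : 0 < b) {Ω : Type*} [MeasurableSpace Ω] {θ : Measure Ω} [IsFiniteMeasure θ]
    {V W : Ω → E d} (hV : MemLp V 2 θ) (hW : MemLp W 2 θ) :
    (a + b) * ∫ ω, L ((a + b)⁻¹ • (V ω + W ω)) ∂θ ≤
      a * ∫ ω, L (a⁻¹ • V ω) ∂θ + b * ∫ ω, L (b⁻¹ • W ω) ∂θ := by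
  have hint {c : ℝ} {Y : Ω → E d} (hY : MemLp Y 2 θ) : Integrable (fun ω => L (c • Y ω)) θ :=
    integrable_comp_of_memLp_two hL hlow hup (hY.const_smul c)
  rw [← integral_const_mul, ← integral_const_mul, ← integral_const_mul,
    ← integral_add ((hint hV).const_mul a) ((hint hW).const_mul b)]
  exact integral_mono ((hint (hV.add hW)).const_mul _)
    (((hint hV).const_mul a).add ((hint hW).const_mul b))
    fun ω => hLconv.perspective_add_le ha hb (V ω) (W ω)

section Value

variable {G : Measure (E d) → ℝ} {m B : ℝ}

lemma sub_mul_le_cost (hG : ∀ ν ∈ P2 d, m ≤ G ν) (hB : 0 ≤ B) (hlow : ∀ z, -B ≤ L z) {τ : ℝ}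
    (hτ : 0 ≤ τ) (hγ : γ ∈ plans ν) :
    m - τ * B ≤ G (expMap γ) + τ * Lag L (scal τ⁻¹ γ) := by
  have := (mem_plans_iff.1 (scal_mem_plans hγ τ⁻¹)).1
  have h1 := hG _ (expMap_mem_P2 hγ)
  have h2 := mul_le_mul_of_nonneg_left (neg_le_Lag hB hlow (scal τ⁻¹ γ)) hτ
  linarith

lemma HL_le (hG : ∀ ν ∈ P2 d, m ≤ G ν) (hB : 0 ≤ B) (hlow : ∀ z, -B ≤ L z) {T t : ℝ}
    (ht : t ≤ T) (hγ : γ ∈ plans ν) :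
    HL G L T t ν ≤ G (expMap γ) + (T - t) * Lag L (scal (T - t)⁻¹ γ) :=
  csInf_le ⟨m - (T - t) * B, by
    rintro _ ⟨γ, hγ, rfl⟩
    exact sub_mul_le_cost hG hB hlow (sub_nonneg.2 ht) hγ⟩ ⟨γ, hγ, rfl⟩

lemma le_HL {T t r : ℝ} (hν : ν ∈ P2 d)
    (h : ∀ γ ∈ plans ν, r ≤ G (expMap γ) + (T - t) * Lag L (scal (T - t)⁻¹ γ)) :
    r ≤ HL G L T t ν :=
  le_csInf ⟨_, _, zero_mem_plans hν, rfl⟩ (by rintro _ ⟨γ, hγ, rfl⟩; exact h γ hγ)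

lemma sub_mul_le_HL (hG : ∀ ν ∈ P2 d, m ≤ G ν) (hB : 0 ≤ B) (hlow : ∀ z, -B ≤ L z)
    {T t : ℝ} (ht : t ≤ T) : ∀ ν ∈ P2 d, m - (T - t) * B ≤ HL G L T t ν :=
  fun _ hν => le_HL hν fun _ hγ => sub_mul_le_cost hG hB hlow (sub_nonneg.2 ht) hγ

end Value

variable {a b : ℝ}

lemma exists_plan_comp_le (hLconv : ConvexOn ℝ univ L) (hL : Continuous L) {B C : ℝ}
    (hlow : ∀ z, -B ≤ L z) (hup : ∀ z, L z ≤ C * (1 + ‖z‖ ^ 2)) (ha : 0 < a) (hb : 0 < b)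
    (hγ : γ ∈ plans μ) {σ : Measure (E d × E d)} (hσ : σ ∈ plans (expMap γ)) :
    ∃ γ' ∈ plans μ, expMap γ' = expMap σ ∧
      (a + b) * Lag L (scal (a + b)⁻¹ γ') ≤ a * Lag L (scal a⁻¹ γ) + b * Lag L (scal b⁻¹ σ) := by
  obtain ⟨hγp, hγμ, hX, hV⟩ := mem_plans_iff.1 hγ
  obtain ⟨hσp, hσexp, -, hW⟩ := mem_plans_iff.1 hσ
  obtain ⟨θ, hθp, hθγ, hθσ⟩ := exists_gluing γ σ (f := fun p => p.1 + p.2) (by fun_prop) hσexp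
  have hθγ' : MeasurePreserving Prod.fst θ γ := ⟨measurable_fst, hθγ⟩
  have hθσ' : MeasurePreserving (fun q : (E d × E d) × E d => (q.1.1 + q.1.2, q.2)) θ σ :=
    ⟨by fun_prop, hθσ⟩
  have hX' := hX.comp_measurePreserving hθγ'
  have hV' := hV.comp_measurePreserving hθγ'
  have hW' := hW.comp_measurePreserving hθσ'
  refine ⟨θ.map fun q => (q.1.1, q.1.2 + q.2), ?_, ?_, ?_⟩
  · have := map_mem_plans hX' (hV'.add hW') (by fun_prop) (by fun_prop)
    rwa [← Measure.map_map measurable_fst measurable_fst, hθγ, hγμ] at this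
  · rw [← hθσ, expMap, expMap, Measure.map_map (by fun_prop) (by fun_prop),
      Measure.map_map (by fun_prop) (by fun_prop)]
    simp only [Function.comp_def, add_assoc]
  · rw [← hθγ, ← hθσ, Lag_scal_map hL _ (by fun_prop), Lag_scal_map hL _ measurable_fst,
      Lag_scal_map hL _ (by fun_prop)]
    exact integral_perspective_le hLconv hL hlow hup ha hb hV' hW'

lemma exists_plan_split (hL : Continuous L) (ha : 0 < a) (hb : 0 < b) (hγ : γ ∈ plans μ) :
    ∃ σ ∈ plans (expMap (scal (a / (a + b)) γ)), expMap σ = expMap γ ∧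
      Lag L (scal b⁻¹ σ) = Lag L (scal (a + b)⁻¹ γ) := by
  obtain ⟨hγp, -, hX, hV⟩ := mem_plans_iff.1 hγ
  have hlam : b⁻¹ * (1 - a / (a + b)) = (a + b)⁻¹ := by field_simp; ring
  set lam := a / (a + b)
  refine ⟨γ.map fun p => (p.1 + lam • p.2, (1 - lam) • p.2), ?_, ?_, ?_⟩
  · have := map_mem_plans (hX.add (hV.const_smul lam)) (hV.const_smul (1 - lam))
      (by fun_prop) (by fun_prop)
    rwa [expMap, scal, Measure.map_map (by fun_prop) (by fun_prop)]
  · rw [expMap, expMap, Measure.map_map (by fun_prop) (by fun_prop)]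
    congr 1
    ext p : 1
    simp [add_assoc, ← add_smul]
  · rw [Lag_scal_map hL _ (by fun_prop), Lag_scal hL]
    simp only [smul_smul, hlam]

end

theorem hopf_lax_DPP_general {d : ℕ} (L : E d → ℝ) (G : Measure (E d) → ℝ) (T : ℝ)
    (hLconv : ConvexOn ℝ Set.univ L)
    (hquad : ∃ C > 0, ∀ z : E d, L z ≤ C * (1 + ‖z‖ ^ 2))
    (hcoer : ∃ c > 0, ∃ C > 0, ∀ z : E d, c * ‖z‖ ^ 2 - C ≤ L z)
    (hGlb : ∃ m : ℝ, ∀ μ ∈ P2 d, m ≤ G μ)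
    (t s : ℝ) (hts : t < s) (hsT : s < T)
    (μ : Measure (E d)) (hμ : μ ∈ P2 d) :
    HL G L T t μ =
      sInf {r | ∃ γ ∈ plans μ,
        r = HL G L T s (expMap γ) + (s - t) * Lag L (scal (s - t)⁻¹ γ)} := by
  have hL : Continuous L := continuousOn_univ.1 (hLconv.continuousOn isOpen_univ)
  obtain ⟨C, -, hup⟩ := hquad
  obtain ⟨c, hc, B, hB, hcoer⟩ := hcoer
  have hlow (z : E d) : -B ≤ L z := by nlinarith [hcoer z, sq_nonneg ‖z‖]
  obtain ⟨m, hG⟩ := hGlb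
  have hst : 0 < s - t := sub_pos.2 hts
  have hTs : 0 < T - s := sub_pos.2 hsT
  have hsplit : s - t + (T - s) = T - t := by ring
  -- the right-hand side is the Hopf-Lax value on `[t, s]` with terminal cost `𝒱(s, ·)`
  change HL G L T t μ = HL (HL G L T s) L s t μ
  apply le_antisymm
  · refine le_HL hμ fun γ hγ => sub_le_iff_le_add.1 (le_HL (expMap_mem_P2 hγ) fun σ hσ => ?_)
    obtain ⟨γ', hγ', hexp, hcomp⟩ := exists_plan_comp_le hLconv hL hlow hup hst hTs hγ hσ
    rw [hsplit] at hcomp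
    have := HL_le hG hB.le hlow (hts.trans hsT).le hγ'
    rw [hexp] at this
    linarith
  · refine le_HL hμ fun γ hγ => ?_
    obtain ⟨σ, hσ, hexp, hLσ⟩ := exists_plan_split hL hst hTs hγ
    rw [hsplit] at hσ hLσ
    have h1 := HL_le (sub_mul_le_HL hG hB.le hlow hsT.le) hB.le hlow hts.le
      (scal_mem_plans hγ ((s - t) / (T - t)))
    have h2 := HL_le hG hB.le hlow hsT.le hσ
    rw [scal_scal, show (s - t)⁻¹ * ((s - t) / (T - t)) = (T - t)⁻¹ by field_simp] at h1
    rw [hexp, hLσ] at h2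
    linarith

theorem hopf_lax_DPP {d : ℕ} (L : E d → ℝ) (G : Measure (E d) → ℝ) (T : ℝ)
    (hLconv : ConvexOn ℝ Set.univ L) (hL0 : L 0 = 0)
    (hsuper : ∀ M : ℝ, ∃ R : ℝ, ∀ z : E d, R ≤ ‖z‖ → M * ‖z‖ ≤ L z)
    (hquad : ∃ C > 0, ∀ z : E d, L z ≤ C * (1 + ‖z‖ ^ 2))
    (hcoer : ∃ c > 0, ∃ C > 0, ∀ z : E d, c * ‖z‖ ^ 2 - C ≤ L z)
    (hGlb : ∃ m : ℝ, ∀ μ ∈ P2 d, m ≤ G μ)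
    (hGlsc : ∀ ρ ∈ P2 d, ∀ seq : ℕ → Measure (E d), (∀ n, seq n ∈ P2 d) →
      Tendsto (fun n => W2 (seq n) ρ) atTop (𝓝 0) →
      G ρ ≤ Filter.liminf (fun n => G (seq n)) atTop)
    (t s : ℝ) (ht : 0 ≤ t) (hts : t < s) (hsT : s < T)
    (μ : Measure (E d)) (hμ : μ ∈ P2 d) :
    HL G L T t μ =
      sInf {r | ∃ γ ∈ plans μ,
        r = HL G L T s (expMap γ) + (s - t) * Lag L (scal (s - t)⁻¹ γ)} :=
  hopf_lax_DPP_general L G T hLconv hquad hcoer hGlb t s hts hsT μ hμ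
end
end

section
/- Let ℱ : 𝒫₂(ℝ^d) → ℝ be flat differentiable at μ ∈ 𝒫₂(ℝ^d) (with flat derivative 𝒟_μℱ(μ,·) normalized by ∫ 𝒟_μℱ(μ,x) dμ = 0), and suppose there exists Λ = Λ(μ) such that for all y₀, y₁ in the support of μ whose segment lies in supp(μ), and all t, h ∈ [0,1]: ℱ((1−h)μ + hδ_{y_t}) ≤ (1−t)ℱ((1−h)μ + hδ_{y₀}) + tℱ((1−h)μ + hδ_{y₁}) − hΛ (t(1−t)/2)|y₀−y₁|², where y_t = (1−t)y₀ + ty₁. Then x ↦ 𝒟_μℱ(μ,x) is Λ-convex on supp(μ). -/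
open MeasureTheory Set Filter Metric
open scoped Topology ENNReal NNReal

noncomputable section

/-- The mixture `(1-h)·μ + h·ν`. -/
def mix {d : ℕ} (h : ℝ) (μ ν : Measure (E d)) : Measure (E d) :=
  ENNReal.ofReal (1 - h) • μ + ENNReal.ofReal h • ν

/-- A constant-speed `W₂`-geodesic in `𝒫₂`. -/
def IsGeodesic {d : ℕ} (c : ℝ → Measure (E d)) : Prop :=
  (∀ t ∈ Icc (0:ℝ) 1, c t ∈ P2 d) ∧
  ∀ s ∈ Icc (0:ℝ) 1, ∀ t ∈ Icc (0:ℝ) 1, W2 (c s) (c t) = |s - t| * W2 (c 0) (c 1)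

/-- `Λ`-geodesic convexity with respect to `W₂`. -/
def GeodesicallyConvex {d : ℕ} (Λ : ℝ) (F : Measure (E d) → ℝ) : Prop :=
  ∀ c : ℝ → Measure (E d), IsGeodesic c → ∀ t ∈ Icc (0:ℝ) 1,
    F (c t) ≤ (1 - t) * F (c 0) + t * F (c 1) - (Λ / 2) * t * (1 - t) * (W2 (c 0) (c 1)) ^ 2

/-- Sequential continuity with respect to the `W₂` distance on `𝒫₂`. -/
def W2Continuous {d : ℕ} (F : Measure (E d) → ℝ) : Prop :=
  ∀ μ ∈ P2 d, ∀ seq : ℕ → Measure (E d), (∀ n, seq n ∈ P2 d) →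
    Tendsto (fun n => W2 (seq n) μ) atTop (𝓝 0) →
    Tendsto (fun n => F (seq n)) atTop (𝓝 (F μ))

/-- The support of a measure. -/
def msupport {d : ℕ} (μ : Measure (E d)) : Set (E d) := {x | ∀ U ∈ 𝓝 x, 0 < μ U}

/-! Testing the flat derivative against Dirac masses gives
`D y = lim_{h → 0⁺} (F((1-h)μ + hδ_y) - F μ) / h`. Dividing the assumed inequality by `h > 0`
(after subtracting `F μ = (1-t) F μ + t F μ` from both sides) and letting `h → 0⁺` turns it into
the `Λ`-convexity inequality for `D`. -/

theorem dirac_mem_P2 {d : ℕ} (y : E d) : Measure.dirac y ∈ P2 d :=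
  ⟨inferInstance, integrable_dirac enorm_lt_top⟩

theorem tendsto_slope_mix_dirac {d : ℕ} {F : Measure (E d) → ℝ} {μ : Measure (E d)}
    {D : E d → ℝ} (hDnorm : ∫ x, D x ∂μ = 0)
    (hflat : ∀ ν ∈ P2 d,
      Tendsto (fun h : ℝ => (F (mix h μ ν) - F μ) / h) (𝓝[>] (0:ℝ))
        (𝓝 ((∫ x, D x ∂ν) - ∫ x, D x ∂μ)))
    (y : E d) :
    Tendsto (fun h : ℝ => (F (mix h μ (Measure.dirac y)) - F μ) / h) (𝓝[>] 0) (𝓝 (D y)) := by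
  simpa only [integral_dirac, hDnorm, sub_zero] using hflat _ (dirac_mem_P2 y)

theorem le_of_tendsto_slope_of_le {f f₀ f₁ : ℝ → ℝ} {v D D₀ D₁ t K : ℝ}
    (hf : Tendsto (fun h => (f h - v) / h) (𝓝[>] 0) (𝓝 D))
    (hf₀ : Tendsto (fun h => (f₀ h - v) / h) (𝓝[>] 0) (𝓝 D₀))
    (hf₁ : Tendsto (fun h => (f₁ h - v) / h) (𝓝[>] 0) (𝓝 D₁))
    (hle : ∀ᶠ h in 𝓝[>] 0, f h ≤ (1 - t) * f₀ h + t * f₁ h - h * K) :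
    D ≤ (1 - t) * D₀ + t * D₁ - K := by
  have hslope : ∀ᶠ h in 𝓝[>] 0,
      (f h - v) / h ≤ (1 - t) * ((f₀ h - v) / h) + t * ((f₁ h - v) / h) - K := by
    filter_upwards [hle, self_mem_nhdsWithin] with h hh (hpos : 0 < h)
    calc (f h - v) / h ≤ ((1 - t) * (f₀ h - v) + t * (f₁ h - v) - h * K) / h :=
          div_le_div_of_nonneg_right (by linarith) hpos.le
      _ = (1 - t) * ((f₀ h - v) / h) + t * ((f₁ h - v) / h) - K := by
          field_simp
  exact le_of_tendsto_of_tendsto hf (((hf₀.const_mul _).add (hf₁.const_mul _)).sub_const K) hslope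

theorem flat_derivative_lambda_convex_general {d : ℕ} (F : Measure (E d) → ℝ)
    (μ : Measure (E d)) (D : E d → ℝ) (Λ : ℝ)
    (hDnorm : (∫ x, D x ∂μ) = 0)
    (hflat : ∀ ν ∈ P2 d,
      Tendsto (fun h : ℝ => (F (mix h μ ν) - F μ) / h) (𝓝[>] (0:ℝ))
        (𝓝 ((∫ x, D x ∂ν) - ∫ x, D x ∂μ)))
    (hineq : ∀ y₀ ∈ msupport μ, ∀ y₁ ∈ msupport μ, segment ℝ y₀ y₁ ⊆ msupport μ →
      ∀ t ∈ Icc (0:ℝ) 1, ∀ h ∈ Icc (0:ℝ) 1,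
        F (mix h μ (Measure.dirac ((1 - t) • y₀ + t • y₁))) ≤
          (1 - t) * F (mix h μ (Measure.dirac y₀)) + t * F (mix h μ (Measure.dirac y₁)) -
            h * Λ * (t * (1 - t) / 2) * ‖y₀ - y₁‖ ^ 2) :
    ∀ y₀ ∈ msupport μ, ∀ y₁ ∈ msupport μ, segment ℝ y₀ y₁ ⊆ msupport μ →
      ∀ t ∈ Icc (0:ℝ) 1,
        D ((1 - t) • y₀ + t • y₁) ≤
          (1 - t) * D y₀ + t * D y₁ - (Λ / 2) * t * (1 - t) * ‖y₀ - y₁‖ ^ 2 := by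
  intro y₀ hy₀ y₁ hy₁ hseg t ht
  have hle : ∀ᶠ h in 𝓝[>] (0:ℝ),
      F (mix h μ (Measure.dirac ((1 - t) • y₀ + t • y₁))) ≤
        (1 - t) * F (mix h μ (Measure.dirac y₀)) + t * F (mix h μ (Measure.dirac y₁)) -
          h * ((Λ / 2) * t * (1 - t) * ‖y₀ - y₁‖ ^ 2) := by
    filter_upwards [Ioc_mem_nhdsGT zero_lt_one] with h hh
    exact (hineq y₀ hy₀ y₁ hy₁ hseg t ht h ⟨hh.1.le, hh.2⟩).trans_eq (by ring)
  have slope := tendsto_slope_mix_dirac hDnorm hflat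
  exact le_of_tendsto_slope_of_le (slope _) (slope y₀) (slope y₁) hle

theorem flat_derivative_lambda_convex {d : ℕ} (F : Measure (E d) → ℝ)
    (μ : Measure (E d)) (hμ : μ ∈ P2 d) (D : E d → ℝ) (Λ : ℝ)
    (hDmeas : Measurable D)
    (hDgrowth : ∃ C : ℝ, ∀ x, |D x| ≤ C * (1 + ‖x‖ ^ 2))
    (hDnorm : (∫ x, D x ∂μ) = 0)
    (hflat : ∀ ν ∈ P2 d,
      Tendsto (fun h : ℝ => (F (mix h μ ν) - F μ) / h) (𝓝[>] (0:ℝ))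
        (𝓝 ((∫ x, D x ∂ν) - ∫ x, D x ∂μ)))
    (hineq : ∀ y₀ ∈ msupport μ, ∀ y₁ ∈ msupport μ, segment ℝ y₀ y₁ ⊆ msupport μ →
      ∀ t ∈ Icc (0:ℝ) 1, ∀ h ∈ Icc (0:ℝ) 1,
        F (mix h μ (Measure.dirac ((1 - t) • y₀ + t • y₁))) ≤
          (1 - t) * F (mix h μ (Measure.dirac y₀)) + t * F (mix h μ (Measure.dirac y₁)) -
            h * Λ * (t * (1 - t) / 2) * ‖y₀ - y₁‖ ^ 2) :
    ∀ y₀ ∈ msupport μ, ∀ y₁ ∈ msupport μ, segment ℝ y₀ y₁ ⊆ msupport μ →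
      ∀ t ∈ Icc (0:ℝ) 1,
        D ((1 - t) • y₀ + t • y₁) ≤
          (1 - t) * D y₀ + t * D y₁ - (Λ / 2) * t * (1 - t) * ‖y₀ - y₁‖ ^ 2 :=
  flat_derivative_lambda_convex_general F μ D Λ hDnorm hflat hineq
end
end

section
/- For any μ, ν ∈ 𝒫₂(ℝ^d) and any optimal coupling σ ∈ Γ₀(μ,ν), the plan ξ := (π₁, π₁ − π₂)_# σ belongs to the superdifferential at μ of the function Φ : η ↦ (1/2)W₂²(η,ν). Concretely: for every plan ζ on ℝ^{2d} with first marginal μ and finite second moment, and every θ ∈ Γ_μ(ξ,ζ), one has (1/2)W₂²(exp_μ(ζ), ν) − (1/2)W₂²(μ,ν) ≤ ∫ ⟨y, z⟩ dθ(x,y,z) + (1/2)‖ζ‖²_μ. -/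
open MeasureTheory Set Filter Metric
open scoped Topology ENNReal NNReal

noncomputable section

/-
Glue `σ` and `ζ` along `μ` through `θ`: if `q = (x, y, z)` with `y = x - y'` and `(x, y') ∼ σ`,
then `(x + z, x - y)` is a coupling of `exp_μ ζ` and `ν`, whose cost `∫ |y + z|² dθ` bounds
`W₂²(exp_μ ζ, ν)`. Expanding `|y + z|² = |y|² + 2⟨y, z⟩ + |z|²`, the `|y|²` term integrates to the
optimal cost `W₂²(μ, ν)` of `σ` and the `|z|²` term to `‖ζ‖²_μ`.
-/

open ProbabilityTheory

section IdentDistrib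

variable {α β γ : Type*} [MeasurableSpace α] [MeasurableSpace β] [MeasurableSpace γ]

lemma identDistrib_comp_of_map_eq {μ : Measure α} {ν : Measure β} {f : α → β} {g : β → γ}
    (hf : Measurable f) (hg : Measurable g) (h : μ.map f = ν) :
    IdentDistrib (g ∘ f) g μ ν :=
  ⟨(hg.comp hf).aemeasurable, hg.aemeasurable, by rw [← h, Measure.map_map hg hf]⟩

lemma memLp_two_of_map_eq {F : Type*} [NormedAddCommGroup F] [MeasurableSpace F] [BorelSpace F]
    [SecondCountableTopology F] {μ : Measure α} {ν : Measure F} {f : α → F} (hf : Measurable f)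
    (h : μ.map f = ν) (hν : Integrable (fun x => ‖x‖ ^ 2) ν) : MemLp f 2 μ :=
  (identDistrib_comp_of_map_eq hf measurable_id h).memLp_iff.2 <|
    (memLp_two_iff_integrable_sq_norm aestronglyMeasurable_id).2 hν

end IdentDistrib

section InnerProductSpace

variable {α F : Type*} [MeasurableSpace α] {μ : Measure α}
  [NormedAddCommGroup F] [InnerProductSpace ℝ F]

lemma MeasureTheory.MemLp.integrable_inner {f g : α → F} (hf : MemLp f 2 μ) (hg : MemLp g 2 μ) :
    Integrable (fun x => inner ℝ (f x) (g x)) μ :=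
  (L2.integrable_inner (hf.toLp f) (hg.toLp g)).congr <| by
    filter_upwards [hf.coeFn_toLp, hg.coeFn_toLp] with x hfx hgx
    rw [hfx, hgx]

lemma integral_norm_add_sq {f g : α → F} (hf : MemLp f 2 μ) (hg : MemLp g 2 μ) :
    ∫ x, ‖f x + g x‖ ^ 2 ∂μ =
      ∫ x, ‖f x‖ ^ 2 ∂μ + 2 * ∫ x, inner ℝ (f x) (g x) ∂μ + ∫ x, ‖g x‖ ^ 2 ∂μ := by
  have hf2 := (memLp_two_iff_integrable_sq_norm hf.1).1 hf
  have hg2 := (memLp_two_iff_integrable_sq_norm hg.1).1 hg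
  have hfg := (hf.integrable_inner hg).const_mul 2
  have hsum : Integrable (fun x => ‖f x‖ ^ 2 + 2 * inner ℝ (f x) (g x)) μ := hf2.add hfg
  simp_rw [norm_add_sq_real]
  rw [integral_add hsum hg2, integral_add hf2 hfg, integral_const_mul]

end InnerProductSpace

variable {d : ℕ}

lemma W2_nonneg (μ ν : Measure (E d)) : 0 ≤ W2 μ ν :=
  Real.sInf_nonneg <| by
    rintro c ⟨γ, -, -, rfl⟩
    exact Real.sqrt_nonneg _

lemma sq_W2_le_integral {μ ν : Measure (E d)} {γ : Measure (E d × E d)}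
    [IsProbabilityMeasure γ] (hγ : IsCoupling γ μ ν) :
    W2 μ ν ^ 2 ≤ ∫ p, ‖p.1 - p.2‖ ^ 2 ∂γ := by
  have hW2 : W2 μ ν ≤ Real.sqrt (∫ p, ‖p.1 - p.2‖ ^ 2 ∂γ) := by
    refine csInf_le ⟨0, ?_⟩ ⟨γ, inferInstance, hγ, rfl⟩
    rintro c ⟨γ', -, -, rfl⟩
    exact Real.sqrt_nonneg _
  calc W2 μ ν ^ 2 ≤ Real.sqrt (∫ p, ‖p.1 - p.2‖ ^ 2 ∂γ) ^ 2 := by gcongr; exact W2_nonneg μ ν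
    _ = ∫ p, ‖p.1 - p.2‖ ^ 2 ∂γ := Real.sq_sqrt (integral_nonneg fun _ => by positivity)

def gluedCoupling (θ : Measure (E d × E d × E d)) : Measure (E d × E d) :=
  θ.map fun q => (q.1 + q.2.2, q.1 - q.2.1)

lemma measurable_gluedCoupling_map :
    Measurable fun q : E d × E d × E d => (q.1 + q.2.2, q.1 - q.2.1) := by
  fun_prop

lemma isCoupling_gluedCoupling {ν : Measure (E d)} {σ ζ : Measure (E d × E d)}
    {θ : Measure (E d × E d × E d)} (hσ : σ.map Prod.snd = ν)
    (hθ : θ ∈ GammaMu (σ.map fun p => (p.1, p.1 - p.2)) ζ) :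
    IsCoupling (gluedCoupling θ) (expMap ζ) ν := by
  obtain ⟨-, hθξ, hθζ⟩ := hθ
  constructor
  · rw [gluedCoupling, Measure.map_map measurable_fst measurable_gluedCoupling_map, expMap,
      ← hθζ, Measure.map_map (by fun_prop) (by fun_prop)]
    rfl
  · have hsnd : (Prod.snd ∘ fun q : E d × E d × E d => (q.1 + q.2.2, q.1 - q.2.1)) =
        (fun p => p.1 - p.2) ∘ fun q => (q.1, q.2.1) := rfl
    rw [gluedCoupling, Measure.map_map measurable_snd measurable_gluedCoupling_map, hsnd,
      ← Measure.map_map (by fun_prop) (by fun_prop), hθξ,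
      Measure.map_map (by fun_prop) (by fun_prop), ← hσ]
    congr 1
    ext p
    simp

instance {θ : Measure (E d × E d × E d)} [IsProbabilityMeasure θ] :
    IsProbabilityMeasure (gluedCoupling θ) :=
  Measure.isProbabilityMeasure_map measurable_gluedCoupling_map.aemeasurable

lemma integral_cost_gluedCoupling (θ : Measure (E d × E d × E d)) :
    ∫ p, ‖p.1 - p.2‖ ^ 2 ∂gluedCoupling θ = ∫ q, ‖q.2.1 + q.2.2‖ ^ 2 ∂θ := by
  rw [gluedCoupling, integral_map measurable_gluedCoupling_map.aemeasurable (by fun_prop)]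
  simp [add_comm]

lemma memLp_snd_of_mem_plans {μ : Measure (E d)} {ζ : Measure (E d × E d)} (hζ : ζ ∈ plans μ) :
    MemLp Prod.snd 2 ζ := by
  refine (memLp_two_iff_integrable_sq_norm measurable_snd.aestronglyMeasurable).2 <|
    hζ.2.2.mono' (by fun_prop) (ae_of_all _ fun p => ?_)
  rw [Real.norm_of_nonneg (by positivity)]
  exact le_add_of_nonneg_left (by positivity)

theorem w2sq_superdifferential_general {d : ℕ} (μ ν : Measure (E d)) (hμ : μ ∈ P2 d) (hν : ν ∈ P2 d)
    (σ : Measure (E d × E d)) (hσ : IsCoupling σ μ ν)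
    (hopt : Real.sqrt (∫ p, ‖p.1 - p.2‖ ^ 2 ∂σ) = W2 μ ν) :
    ∀ ζ ∈ plans μ, ∀ θ ∈ GammaMu (σ.map (fun p => (p.1, p.1 - p.2))) ζ,
      (1 / 2) * (W2 (expMap ζ) ν) ^ 2 - (1 / 2) * (W2 μ ν) ^ 2 ≤
        (∫ q, (rinner (q.2.1) (q.2.2)) ∂θ) + (1 / 2) * (plNorm ζ) ^ 2 := by
  intro ζ hζ θ hθ
  have : IsProbabilityMeasure θ := hθ.1
  have hy_law : IdentDistrib (fun q : E d × E d × E d => q.2.1) (fun p : E d × E d => p.1 - p.2) θ σ :=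
    (identDistrib_comp_of_map_eq (f := fun q : E d × E d × E d => (q.1, q.2.1)) (by fun_prop)
      measurable_snd hθ.2.1).trans
      (identDistrib_comp_of_map_eq (f := fun p : E d × E d => (p.1, p.1 - p.2)) (by fun_prop)
        measurable_snd rfl).symm
  have hz_law : IdentDistrib (fun q : E d × E d × E d => q.2.2) Prod.snd θ ζ :=
    identDistrib_comp_of_map_eq (f := fun q : E d × E d × E d => (q.1, q.2.2)) (by fun_prop)
      measurable_snd hθ.2.2
  have hσL2 : MemLp (fun p : E d × E d => p.1 - p.2) 2 σ :=
    (memLp_two_of_map_eq measurable_fst hσ.1 hμ.2).sub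
      (memLp_two_of_map_eq measurable_snd hσ.2 hν.2)
  have hcost := sq_W2_le_integral (isCoupling_gluedCoupling hσ.2 hθ)
  rw [integral_cost_gluedCoupling, integral_norm_add_sq (hy_law.memLp_iff.2 hσL2)
    (hz_law.memLp_iff.2 (memLp_snd_of_mem_plans hζ)), hy_law.norm.sq.integral_eq,
    hz_law.norm.sq.integral_eq] at hcost
  rw [← hopt, plNorm, Real.sq_sqrt (integral_nonneg fun _ => by positivity),
    Real.sq_sqrt (integral_nonneg fun _ => by positivity)]
  unfold rinner
  linarith

theorem w2sq_superdifferential {d : ℕ} (μ ν : Measure (E d)) (hμ : μ ∈ P2 d) (hν : ν ∈ P2 d)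
    (σ : Measure (E d × E d)) (hσp : IsProbabilityMeasure σ) (hσ : IsCoupling σ μ ν)
    (hopt : Real.sqrt (∫ p, ‖p.1 - p.2‖ ^ 2 ∂σ) = W2 μ ν) :
    ∀ ζ ∈ plans μ, ∀ θ ∈ GammaMu (σ.map (fun p => (p.1, p.1 - p.2))) ζ,
      (1 / 2) * (W2 (expMap ζ) ν) ^ 2 - (1 / 2) * (W2 μ ν) ^ 2 ≤
        (∫ q, (rinner (q.2.1) (q.2.2)) ∂θ) + (1 / 2) * (plNorm ζ) ^ 2 :=
  w2sq_superdifferential_general μ ν hμ hν σ hσ hopt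
end
end
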